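/- Under the energy conservation setting with V_X(λ) = (m²/2)λ + W_X(λ), W_X(λ) ≥ 0 for λ ≥ 0, m > 0, and grid ratio τ/ε ≤ 1/√n, any ℓ² solution ψ of the Strauss–Vazquez scheme satisfies εⁿ ∑_X |ψ_X^t|² ≤ 4E⁰/m² for all t ∈ ℤ, where E⁰ is the conserved discrete energy at t = 0. -/

import Mathlib

/-!
Pairing the scheme with `ψ^{t+1} - ψ^{t-1}` and summing over the lattice shows that `E^t` does
not depend on `t`: the discrete Laplacian is symmetric on `ℓ²`, and the divided difference `B`
satisfies `B_X(λ, μ) (λ - μ) = V_X(λ) - V_X(μ)`, so the potential terms telescope. Under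
`τ/ε ≤ 1/√n` every term of the energy density is nonnegative, and `V_X(λ) ≥ m²λ/2` bounds the
density at `X` below by `m² |ψ_X^t|² / 4`.
-/

open scoped InnerProductSpace

section Summation

variable {ι F : Type*} [NormedAddCommGroup F] [InnerProductSpace ℝ F]

lemma summable_inner_of_summable_norm_sq {u v : ι → F}
    (hu : Summable fun i => ‖u i‖ ^ 2) (hv : Summable fun i => ‖v i‖ ^ 2) :
    Summable fun i => ⟪u i, v i⟫_ℝ := by
  refine Summable.of_norm_bounded ((hu.add hv).div_const 2) fun i => ?_
  rw [Real.norm_eq_abs]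
  nlinarith [abs_real_inner_le_norm (u i) (v i), sq_nonneg (‖u i‖ - ‖v i‖)]

lemma summable_norm_sub_sq {u v : ι → F}
    (hu : Summable fun i => ‖u i‖ ^ 2) (hv : Summable fun i => ‖v i‖ ^ 2) :
    Summable fun i => ‖u i - v i‖ ^ 2 := by
  simp_rw [norm_sub_sq_real]
  exact (hu.sub ((summable_inner_of_summable_norm_sq hu hv).mul_left 2)).add hv

lemma Summable.comp_add_right_of_group [AddGroup ι] {α : Type*} [AddCommMonoid α]
    [TopologicalSpace α] {f : ι → α} (hf : Summable f) (a : ι) :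
    Summable fun i => f (i + a) :=
  (Equiv.addRight a).summable_iff.2 hf

lemma tsum_inner_comp_add_right [AddGroup ι] (u v : ι → F) (a : ι) :
    ∑' i, ⟪u i, v (i + a)⟫_ℝ = ∑' i, ⟪v i, u (i - a)⟫_ℝ := by
  rw [← (Equiv.subRight a).tsum_eq]
  simp [real_inner_comm]

end Summation

lemma hasSum_sum_norm_sq_shift_sub {n : ℕ} {E : Type*} [SeminormedAddCommGroup E]
    {u : (Fin n → ℤ) → E}
    (hu : Summable fun X => ‖u X‖ ^ 2) :
    HasSum (fun X => ∑ j, (‖u (X + Pi.single j 1)‖ ^ 2 + ‖u (X - Pi.single j 1)‖ ^ 2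
      - 2 * ‖u X‖ ^ 2)) 0 := by
  have htsum (a : Fin n → ℤ) : ∑' X, ‖u (X + a)‖ ^ 2 = ∑' X, ‖u X‖ ^ 2 :=
    (Equiv.addRight a).tsum_eq fun X => ‖u X‖ ^ 2
  have hsum := hasSum_sum (s := Finset.univ) fun (j : Fin n) _ =>
    ((hu.comp_add_right_of_group (Pi.single j 1)).hasSum.add
      (hu.comp_add_right_of_group (-Pi.single j 1)).hasSum).sub (hu.hasSum.mul_left 2)
  rw [Finset.sum_eq_zero fun j _ => by rw [htsum, htsum]; ring] at hsum
  simpa only [sub_eq_add_neg] using hsum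

section Lattice

variable {n : ℕ} {F : Type*} [NormedAddCommGroup F] [InnerProductSpace ℝ F]

def latticeLaplacian (u : (Fin n → ℤ) → F) (X : Fin n → ℤ) : F :=
  ∑ j, (u (X + Pi.single j 1) - (2 : ℝ) • u X + u (X - Pi.single j 1))

lemma hasSum_inner_latticeLaplacian {u v : (Fin n → ℤ) → F}
    (hu : Summable fun X => ‖u X‖ ^ 2) (hv : Summable fun X => ‖v X‖ ^ 2) :
    HasSum (fun X => ⟪u X, latticeLaplacian v X⟫_ℝ)
      (∑ j, (∑' X, ⟪u X, v (X + Pi.single j 1)⟫_ℝ + ∑' X, ⟪u X, v (X - Pi.single j 1)⟫_ℝ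
        - 2 * ∑' X, ⟪u X, v X⟫_ℝ)) := by
  have hshift (a : Fin n → ℤ) : Summable fun X => ⟪u X, v (X + a)⟫_ℝ :=
    summable_inner_of_summable_norm_sq hu (hv.comp_add_right_of_group a)
  have hshift' (a : Fin n → ℤ) : Summable fun X => ⟪u X, v (X - a)⟫_ℝ := by
    simpa only [sub_eq_add_neg] using hshift (-a)
  have hdiag := summable_inner_of_summable_norm_sq hu hv
  have hterm : (fun X => ⟪u X, latticeLaplacian v X⟫_ℝ) = fun X => ∑ j,
      (⟪u X, v (X + Pi.single j 1)⟫_ℝ + ⟪u X, v (X - Pi.single j 1)⟫_ℝ - 2 * ⟪u X, v X⟫_ℝ) := by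
    funext X
    simp only [latticeLaplacian, inner_sum, inner_add_right, inner_sub_right,
      real_inner_smul_right]
    exact Finset.sum_congr rfl fun j _ => by ring
  rw [hterm]
  exact hasSum_sum fun j _ =>
    ((hshift _).hasSum.add (hshift' _).hasSum).sub (hdiag.hasSum.mul_left 2)

lemma tsum_inner_latticeLaplacian_comm {u v : (Fin n → ℤ) → F}
    (hu : Summable fun X => ‖u X‖ ^ 2) (hv : Summable fun X => ‖v X‖ ^ 2) :
    ∑' X, ⟪u X, latticeLaplacian v X⟫_ℝ = ∑' X, ⟪v X, latticeLaplacian u X⟫_ℝ := by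
  rw [(hasSum_inner_latticeLaplacian hu hv).tsum_eq,
    (hasSum_inner_latticeLaplacian hv hu).tsum_eq]
  refine Finset.sum_congr rfl fun j _ => ?_
  rw [tsum_inner_comp_add_right u v, ← tsum_inner_comp_add_right v u]
  simp only [real_inner_comm (u _)]
  ring

end Lattice

noncomputable section EnergyDensity

variable {n : ℕ} {F : Type*} [NormedAddCommGroup F]

def energyDensity (τ ε : ℝ) (V : (Fin n → ℤ) → ℝ → ℝ) (ψ : ℤ → (Fin n → ℤ) → F) (t : ℤ)
    (X : Fin n → ℤ) : ℝ :=
  (1 / τ ^ 2 - n / ε ^ 2) * ‖ψ (t + 1) X - ψ t X‖ ^ 2 / 2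
    + (∑ j : Fin n, (‖ψ (t + 1) X - ψ t (X + Pi.single j 1)‖ ^ 2
        + ‖ψ (t + 1) X - ψ t (X - Pi.single j 1)‖ ^ 2)) / (4 * ε ^ 2)
    + (V X (‖ψ (t + 1) X‖ ^ 2) + V X (‖ψ t X‖ ^ 2)) / 2

lemma mul_norm_sq_le_energyDensity {τ ε m : ℝ} {V : (Fin n → ℤ) → ℝ → ℝ}
    (hcoeff : 0 ≤ 1 / τ ^ 2 - n / ε ^ 2) (hV : ∀ X l, 0 ≤ l → m ^ 2 / 2 * l ≤ V X l)
    (ψ : ℤ → (Fin n → ℤ) → F) (t : ℤ) (X : Fin n → ℤ) :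
    m ^ 2 / 4 * ‖ψ t X‖ ^ 2 ≤ energyDensity τ ε V ψ t X := by
  have htime : 0 ≤ (1 / τ ^ 2 - n / ε ^ 2) * ‖ψ (t + 1) X - ψ t X‖ ^ 2 / 2 :=
    div_nonneg (mul_nonneg hcoeff (sq_nonneg _)) zero_le_two
  have hspace : 0 ≤ (∑ j : Fin n, (‖ψ (t + 1) X - ψ t (X + Pi.single j 1)‖ ^ 2
      + ‖ψ (t + 1) X - ψ t (X - Pi.single j 1)‖ ^ 2)) / (4 * ε ^ 2) := by positivity
  have hVnext := hV X _ (sq_nonneg ‖ψ (t + 1) X‖)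
  have hVnow := hV X _ (sq_nonneg ‖ψ t X‖)
  have hVnext_nonneg : 0 ≤ m ^ 2 / 2 * ‖ψ (t + 1) X‖ ^ 2 := by positivity
  unfold energyDensity
  linarith

end EnergyDensity

noncomputable section Energy

variable {n : ℕ} {F : Type*} [NormedAddCommGroup F] [InnerProductSpace ℝ F]

lemma norm_sub_sq_add_norm_sub_sq (a b p q : F) :
    ‖a - p‖ ^ 2 + ‖a - q‖ ^ 2
      = ‖p‖ ^ 2 + ‖q‖ ^ 2 - 2 * ‖b‖ ^ 2 - 2 * ⟪a, p - (2 : ℝ) • b + q⟫_ℝ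
        + 2 * ‖a - b‖ ^ 2 := by
  simp only [norm_sub_sq_real, inner_add_right, inner_sub_right, real_inner_smul_right]
  ring

lemma energyDensity_identity (τ ε : ℝ) (a b : F) (p q : Fin n → F) :
    (1 / τ ^ 2 - n / ε ^ 2) * ‖a - b‖ ^ 2 / 2
        + (∑ j, (‖a - p j‖ ^ 2 + ‖a - q j‖ ^ 2)) / (4 * ε ^ 2)
      = ‖a - b‖ ^ 2 / (2 * τ ^ 2)
        + (∑ j, (‖p j‖ ^ 2 + ‖q j‖ ^ 2 - 2 * ‖b‖ ^ 2)) / (4 * ε ^ 2)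
        - ⟪a, ∑ j, (p j - (2 : ℝ) • b + q j)⟫_ℝ / (2 * ε ^ 2) := by
  rw [inner_sum]
  simp only [norm_sub_sq_add_norm_sub_sq a b, Finset.sum_add_distrib, Finset.sum_sub_distrib,
    ← Finset.mul_sum, Finset.sum_const, Finset.card_univ, Fintype.card_fin, nsmul_eq_mul]
  ring

/-- Twice the total energy, after summation by parts of the spatial difference terms. -/
def reducedEnergy (τ ε : ℝ) (V : (Fin n → ℤ) → ℝ → ℝ) (ψ : ℤ → (Fin n → ℤ) → F) (t : ℤ) :
    ℝ :=
  (∑' X, ‖ψ (t + 1) X - ψ t X‖ ^ 2) / τ ^ 2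
    - (∑' X, ⟪ψ (t + 1) X, latticeLaplacian (ψ t) X⟫_ℝ) / ε ^ 2
    + ∑' X, V X (‖ψ (t + 1) X‖ ^ 2) + ∑' X, V X (‖ψ t X‖ ^ 2)

lemma hasSum_energyDensity (τ ε : ℝ) {V : (Fin n → ℤ) → ℝ → ℝ} {ψ : ℤ → (Fin n → ℤ) → F}
    {t : ℤ} (hψ : Summable fun X => ‖ψ t X‖ ^ 2) (hψ' : Summable fun X => ‖ψ (t + 1) X‖ ^ 2)
    (hV : Summable fun X => V X (‖ψ t X‖ ^ 2))
    (hV' : Summable fun X => V X (‖ψ (t + 1) X‖ ^ 2)) :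
    HasSum (energyDensity τ ε V ψ t) (reducedEnergy τ ε V ψ t / 2) := by
  have hpt : energyDensity τ ε V ψ t = fun X => ‖ψ (t + 1) X - ψ t X‖ ^ 2 / (2 * τ ^ 2)
      + (∑ j, (‖ψ t (X + Pi.single j 1)‖ ^ 2 + ‖ψ t (X - Pi.single j 1)‖ ^ 2
          - 2 * ‖ψ t X‖ ^ 2)) / (4 * ε ^ 2)
      - ⟪ψ (t + 1) X, latticeLaplacian (ψ t) X⟫_ℝ / (2 * ε ^ 2)
      + (V X (‖ψ (t + 1) X‖ ^ 2) + V X (‖ψ t X‖ ^ 2)) / 2 :=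
    funext fun X => by rw [energyDensity, energyDensity_identity]; rfl
  rw [hpt]
  have hsum := ((((summable_norm_sub_sq hψ' hψ).hasSum.div_const (2 * τ ^ 2)).add
    ((hasSum_sum_norm_sq_shift_sub hψ).div_const (4 * ε ^ 2))).sub
    ((hasSum_inner_latticeLaplacian hψ' hψ).summable.hasSum.div_const (2 * ε ^ 2))).add
    ((hV'.hasSum.add hV.hasSum).div_const 2)
  exact (congrArg (HasSum _) (by unfold reducedEnergy; ring)).mp hsum

lemma leapfrog_energy_identity {a b c L : F} {α β γ : ℝ}
    (h : α • (a - (2 : ℝ) • b + c) = γ • L - β • (a + c)) :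
    α * (‖a - b‖ ^ 2 - ‖b - c‖ ^ 2) = γ * (⟪a, L⟫_ℝ - ⟪c, L⟫_ℝ) - β * (‖a‖ ^ 2 - ‖c‖ ^ 2) := by
  have h' := congrArg (fun w => ⟪a - c, w⟫_ℝ) h
  simp only [inner_sub_left, inner_add_right, inner_sub_right, real_inner_smul_right,
    real_inner_self_eq_norm_sq] at h'
  rw [real_inner_comm a c, real_inner_comm b c] at h'
  rw [norm_sub_sq_real, norm_sub_sq_real]
  linear_combination h'

lemma reducedEnergy_sub_one {τ ε : ℝ} {V : (Fin n → ℤ) → ℝ → ℝ} {ψ : ℤ → (Fin n → ℤ) → F}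
    (hψ : ∀ t, Summable fun X => ‖ψ t X‖ ^ 2) (hV : ∀ t, Summable fun X => V X (‖ψ t X‖ ^ 2))
    (t : ℤ)
    (hflux : ∀ X, (τ ^ 2)⁻¹ * (‖ψ (t + 1) X - ψ t X‖ ^ 2 - ‖ψ t X - ψ (t - 1) X‖ ^ 2)
      = (ε ^ 2)⁻¹ * (⟪ψ (t + 1) X, latticeLaplacian (ψ t) X⟫_ℝ
          - ⟪ψ (t - 1) X, latticeLaplacian (ψ t) X⟫_ℝ)
        - (V X (‖ψ (t + 1) X‖ ^ 2) - V X (‖ψ (t - 1) X‖ ^ 2))) :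
    reducedEnergy τ ε V ψ t = reducedEnergy τ ε V ψ (t - 1) := by
  have hlhs := ((summable_norm_sub_sq (hψ (t + 1)) (hψ t)).hasSum.sub
    (summable_norm_sub_sq (hψ t) (hψ (t - 1))).hasSum).mul_left (τ ^ 2)⁻¹
  have hrhs := (((hasSum_inner_latticeLaplacian (hψ (t + 1)) (hψ t)).summable.hasSum.sub
    (hasSum_inner_latticeLaplacian (hψ (t - 1)) (hψ t)).summable.hasSum).mul_left (ε ^ 2)⁻¹).sub
    ((hV (t + 1)).hasSum.sub (hV (t - 1)).hasSum)
  rw [← funext hflux] at hrhs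
  have hbalance := hlhs.unique hrhs
  rw [reducedEnergy, reducedEnergy, sub_add_cancel,
    tsum_inner_latticeLaplacian_comm (hψ t) (hψ (t - 1))]
  linear_combination hbalance

end Energy

lemma divided_difference_mul_sub (f : ℝ → ℝ) (l μ : ℝ) :
    (if l = μ then deriv f l else (f l - f μ) / (l - μ)) * (l - μ) = f l - f μ := by
  split_ifs with h
  · simp [h]
  · exact div_mul_cancel₀ _ (sub_ne_zero.2 h)

lemma one_div_sq_sub_nat_div_sq_nonneg {τ ε : ℝ} {n : ℕ} (hτ : 0 < τ) (hε : 0 < ε)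
    (hratio : τ / ε ≤ 1 / √n) : 0 ≤ 1 / τ ^ 2 - n / ε ^ 2 := by
  have hle : τ * √n ≤ ε := by
    rcases (Real.sqrt_nonneg n).eq_or_lt with h0 | hpos
    · rw [← h0, mul_zero]
      exact hε.le
    · rwa [div_le_div_iff₀ hε hpos, one_mul] at hratio
  have hsq : n * τ ^ 2 ≤ ε ^ 2 := by
    calc (n : ℝ) * τ ^ 2 = (τ * √n) ^ 2 := by rw [mul_pow, Real.sq_sqrt n.cast_nonneg]; ring
      _ ≤ ε ^ 2 := pow_le_pow_left₀ (by positivity) hle 2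
  rw [sub_nonneg, div_le_div_iff₀ (by positivity) (by positivity)]
  linarith

theorem stmt13_general (n N : ℕ)
    (τ ε : ℝ) (hτ : 0 < τ) (hε : 0 < ε)
    (hratio : τ / ε ≤ 1 / Real.sqrt n)
    (m : ℝ) (hm : 0 < m)
    (W : (Fin n → ℤ) → ℝ → ℝ)
    (hWpos : ∀ X (l : ℝ), 0 ≤ l → 0 ≤ W X l)
    (V : (Fin n → ℤ) → ℝ → ℝ)
    (hV : ∀ X (l : ℝ), V X l = m ^ 2 / 2 * l + W X l)
    (B : (Fin n → ℤ) → ℝ → ℝ → ℝ)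
    (hB : ∀ X (l μ : ℝ), B X l μ =
      if l = μ then deriv (V X) l else (V X l - V X μ) / (l - μ))
    (ψ : ℤ → (Fin n → ℤ) → EuclideanSpace ℂ (Fin N))
    (hl2 : ∀ t : ℤ, Summable fun X : Fin n → ℤ => ‖ψ t X‖ ^ 2)
    (hVsum : ∀ t : ℤ, Summable fun X : Fin n → ℤ => V X (‖ψ t X‖ ^ 2))
    (hscheme : ∀ (t : ℤ) (X : Fin n → ℤ),
      (τ ^ 2)⁻¹ • (ψ (t + 1) X - (2 : ℝ) • ψ t X + ψ (t - 1) X)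
        = (ε ^ 2)⁻¹ • (∑ j : Fin n,
            (ψ t (X + Pi.single j 1) - (2 : ℝ) • ψ t X + ψ t (X - Pi.single j 1)))
          - B X (‖ψ (t + 1) X‖ ^ 2) (‖ψ (t - 1) X‖ ^ 2)
              • (ψ (t + 1) X + ψ (t - 1) X))
    (E : ℤ → ℝ)
    (hE : ∀ t : ℤ, E t = ε ^ n * ∑' X : Fin n → ℤ,
      ((1 / τ ^ 2 - n / ε ^ 2) * ‖ψ (t + 1) X - ψ t X‖ ^ 2 / 2
        + (∑ j : Fin n, (‖ψ (t + 1) X - ψ t (X + Pi.single j 1)‖ ^ 2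
            + ‖ψ (t + 1) X - ψ t (X - Pi.single j 1)‖ ^ 2)) / (4 * ε ^ 2)
        + (V X (‖ψ (t + 1) X‖ ^ 2) + V X (‖ψ t X‖ ^ 2)) / 2)) :
    ∀ t : ℤ, ε ^ n * ∑' X : Fin n → ℤ, ‖ψ t X‖ ^ 2 ≤ 4 * E 0 / m ^ 2 := by
  have hVlower : ∀ X (l : ℝ), 0 ≤ l → m ^ 2 / 2 * l ≤ V X l := fun X l hl => by
    rw [hV]
    linarith [hWpos X l hl]
  have hsum (t : ℤ) := hasSum_energyDensity τ ε (hl2 t) (hl2 (t + 1)) (hVsum t) (hVsum (t + 1))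
  have hperiodic : Function.Periodic (reducedEnergy τ ε V ψ) 1 := fun t => by
    refine (reducedEnergy_sub_one hl2 hVsum (t + 1) fun X => ?_).trans
      (by rw [add_sub_cancel_right])
    rw [leapfrog_energy_identity (L := latticeLaplacian (ψ (t + 1)) X) (hscheme (t + 1) X), hB,
      divided_difference_mul_sub]
  have hconserved (t : ℤ) : E t = E 0 := by
    have hR : reducedEnergy τ ε V ψ t = reducedEnergy τ ε V ψ 0 := by
      simpa using hperiodic.int_mul_eq t
    rw [hE, hE]
    change ε ^ n * ∑' X, energyDensity τ ε V ψ t X = ε ^ n * ∑' X, energyDensity τ ε V ψ 0 X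
    rw [(hsum t).tsum_eq, (hsum 0).tsum_eq, hR]
  intro t
  have hlower : ε ^ n * (m ^ 2 / 4 * ∑' X, ‖ψ t X‖ ^ 2) ≤ E t := by
    rw [hE, ← tsum_mul_left]
    exact mul_le_mul_of_nonneg_left (((hl2 t).mul_left _).tsum_le_tsum
      (mul_norm_sq_le_energyDensity (one_div_sq_sub_nat_div_sq_nonneg hτ hε hratio) hVlower ψ t)
      (hsum t).summable) (by positivity)
  rw [← hconserved t, le_div_iff₀ (by positivity)]
  linarith

theorem stmt13 (n N : ℕ) (hn : 1 ≤ n) (hN : 1 ≤ N)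
    (τ ε : ℝ) (hτ : 0 < τ) (hε : 0 < ε)
    (hratio : τ / ε ≤ 1 / Real.sqrt n)
    (m : ℝ) (hm : 0 < m)
    (W : (Fin n → ℤ) → ℝ → ℝ) (hW : ∀ X, ContDiff ℝ 1 (W X))
    (hWpos : ∀ X (l : ℝ), 0 ≤ l → 0 ≤ W X l)
    (V : (Fin n → ℤ) → ℝ → ℝ)
    (hV : ∀ X (l : ℝ), V X l = m ^ 2 / 2 * l + W X l)
    (B : (Fin n → ℤ) → ℝ → ℝ → ℝ)
    (hB : ∀ X (l μ : ℝ), B X l μ =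
      if l = μ then deriv (V X) l else (V X l - V X μ) / (l - μ))
    (ψ : ℤ → (Fin n → ℤ) → EuclideanSpace ℂ (Fin N))
    (hl2 : ∀ t : ℤ, Summable fun X : Fin n → ℤ => ‖ψ t X‖ ^ 2)
    (hVsum : ∀ t : ℤ, Summable fun X : Fin n → ℤ => V X (‖ψ t X‖ ^ 2))
    (hscheme : ∀ (t : ℤ) (X : Fin n → ℤ),
      (τ ^ 2)⁻¹ • (ψ (t + 1) X - (2 : ℝ) • ψ t X + ψ (t - 1) X)
        = (ε ^ 2)⁻¹ • (∑ j : Fin n,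
            (ψ t (X + Pi.single j 1) - (2 : ℝ) • ψ t X + ψ t (X - Pi.single j 1)))
          - B X (‖ψ (t + 1) X‖ ^ 2) (‖ψ (t - 1) X‖ ^ 2)
              • (ψ (t + 1) X + ψ (t - 1) X))
    (E : ℤ → ℝ)
    (hE : ∀ t : ℤ, E t = ε ^ n * ∑' X : Fin n → ℤ,
      ((1 / τ ^ 2 - n / ε ^ 2) * ‖ψ (t + 1) X - ψ t X‖ ^ 2 / 2
        + (∑ j : Fin n, (‖ψ (t + 1) X - ψ t (X + Pi.single j 1)‖ ^ 2
            + ‖ψ (t + 1) X - ψ t (X - Pi.single j 1)‖ ^ 2)) / (4 * ε ^ 2)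
        + (V X (‖ψ (t + 1) X‖ ^ 2) + V X (‖ψ t X‖ ^ 2)) / 2)) :
    ∀ t : ℤ, ε ^ n * ∑' X : Fin n → ℤ, ‖ψ t X‖ ^ 2 ≤ 4 * E 0 / m ^ 2 :=
  stmt13_general n N τ ε hτ hε hratio m hm W hWpos V hV B hB ψ hl2 hVsum hscheme E hE
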